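/- Let h = h_11·x·y + h_10·x + h_01·y + h_00, H_1 = h_11, H_2 = h_11 h_00 − h_10 h_01, and suppose h_11 ≠ 0, h_11 x + h_01 ≠ 0 on a domain where (1−h²)² − 4(H_1 h − H_2)² > 0 and |h| < 1. Then the function z(x,y) = [1 − h² + √((1−h²)² − 4(H_1 h − H_2)²)] / (2(h_11 x + h_01)²) satisfies the linear combination of symmetry generators h_11·(x z_x − y z_y + 2z) + h_01·z_x − h_10·z_y = 0. -/

import Mathlib

open Real

/-!
Write `h` for `hfun` and `L = h₁₁x + h₀₁ = ∂h/∂y`. Every function of the form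
`z = F(h)/(2L²)` is invariant: the vector field `L ∂_x − (∂h/∂x) ∂_y` annihilates `h`, so
applied to `z` it only sees the factor `1/(2L²)`, giving `L · (−h₁₁ F(h)/L³) = −2h₁₁ z`,
which is cancelled by the term `2h₁₁ z` of `h₁₁ 𝔰`. The Lipschitz solution is of this form
with `F(u) = 1 − u² + √((1−u²)² − 4(H₁u − H₂)²)`, which is differentiable wherever the
discriminant is nonzero.
-/

/-- The bilinear function `h = h₁₁xy + h₁₀x + h₀₁y + h₀₀`. -/
def hfun (h11 h10 h01 h00 x y : ℝ) : ℝ := h11 * x * y + h10 * x + h01 * y + h00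

/-- The general Lipschitz solution of the constant astigmatism equation:
`z = (1 − h² + √((1−h²)² − 4(H₁h − H₂)²)) / (2(h₁₁x + h₀₁)²)`,
with `H₁ = h₁₁`, `H₂ = h₁₁h₀₀ − h₁₀h₀₁`. -/
noncomputable def zLip (h11 h10 h01 h00 x y : ℝ) : ℝ :=
  (1 - hfun h11 h10 h01 h00 x y ^ 2
    + Real.sqrt ((1 - hfun h11 h10 h01 h00 x y ^ 2) ^ 2
        - 4 * (h11 * hfun h11 h10 h01 h00 x y - (h11 * h00 - h10 * h01)) ^ 2))
    / (2 * (h11 * x + h01) ^ 2)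

noncomputable def lipschitzProfile (H₁ H₂ u : ℝ) : ℝ :=
  1 - u ^ 2 + √((1 - u ^ 2) ^ 2 - 4 * (H₁ * u - H₂) ^ 2)

noncomputable def zAnsatz (F : ℝ → ℝ) (h11 h10 h01 h00 x y : ℝ) : ℝ :=
  F (hfun h11 h10 h01 h00 x y) / (2 * (h11 * x + h01) ^ 2)

lemma zLip_eq_zAnsatz (h11 h10 h01 h00 : ℝ) :
    zLip h11 h10 h01 h00 =
      zAnsatz (lipschitzProfile h11 (h11 * h00 - h10 * h01)) h11 h10 h01 h00 :=
  rfl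

lemma differentiableAt_lipschitzProfile {H₁ H₂ u : ℝ}
    (hdisc : (1 - u ^ 2) ^ 2 - 4 * (H₁ * u - H₂) ^ 2 ≠ 0) :
    DifferentiableAt ℝ (lipschitzProfile H₁ H₂) u := by
  unfold lipschitzProfile
  fun_prop (disch := exact hdisc)

section Ansatz

variable {F : ℝ → ℝ} {h11 h10 h01 h00 x y : ℝ}

lemma hasDerivAt_hfun_left :
    HasDerivAt (fun t => hfun h11 h10 h01 h00 t y) (h11 * y + h10) x := by
  have hlin : (fun t => hfun h11 h10 h01 h00 t y) =
      fun t => (h11 * y + h10) * t + (h01 * y + h00) := by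
    funext t; simp only [hfun]; ring
  rw [hlin]
  simpa using ((hasDerivAt_id x).const_mul (h11 * y + h10)).add_const (h01 * y + h00)

lemma hasDerivAt_hfun_right :
    HasDerivAt (fun t => hfun h11 h10 h01 h00 x t) (h11 * x + h01) y := by
  have hlin : (fun t => hfun h11 h10 h01 h00 x t) =
      fun t => (h11 * x + h01) * t + (h10 * x + h00) := by
    funext t; simp only [hfun]; ring
  rw [hlin]
  simpa using ((hasDerivAt_id y).const_mul (h11 * x + h01)).add_const (h10 * x + h00)

lemma hasDerivAt_zAnsatz_left (hF : DifferentiableAt ℝ F (hfun h11 h10 h01 h00 x y))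
    (hden : h11 * x + h01 ≠ 0) :
    HasDerivAt (fun t => zAnsatz F h11 h10 h01 h00 t y)
      ((deriv F (hfun h11 h10 h01 h00 x y) * (h11 * y + h10) * (h11 * x + h01)
          - 2 * h11 * F (hfun h11 h10 h01 h00 x y)) / (2 * (h11 * x + h01) ^ 3)) x := by
  have hnum := hF.hasDerivAt.comp x hasDerivAt_hfun_left
  have hL : HasDerivAt (fun t => h11 * t + h01) h11 x := by
    simpa using ((hasDerivAt_id x).const_mul h11).add_const h01
  refine (hnum.fun_div ((hL.fun_pow 2).const_mul 2) (by positivity)).congr_deriv ?_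
  rw [Function.comp_apply]
  field_simp
  ring

lemma hasDerivAt_zAnsatz_right (hF : DifferentiableAt ℝ F (hfun h11 h10 h01 h00 x y)) :
    HasDerivAt (fun t => zAnsatz F h11 h10 h01 h00 x t)
      (deriv F (hfun h11 h10 h01 h00 x y) * (h11 * x + h01) / (2 * (h11 * x + h01) ^ 2)) y :=
  (hF.hasDerivAt.comp y hasDerivAt_hfun_right).div_const _

theorem zAnsatz_symmetry_invariant (hF : DifferentiableAt ℝ F (hfun h11 h10 h01 h00 x y))
    (hden : h11 * x + h01 ≠ 0) :
    h11 * (x * deriv (fun t => zAnsatz F h11 h10 h01 h00 t y) x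
        - y * deriv (fun t => zAnsatz F h11 h10 h01 h00 x t) y
        + 2 * zAnsatz F h11 h10 h01 h00 x y)
      + h01 * deriv (fun t => zAnsatz F h11 h10 h01 h00 t y) x
      - h10 * deriv (fun t => zAnsatz F h11 h10 h01 h00 x t) y = 0 := by
  rw [(hasDerivAt_zAnsatz_left hF hden).deriv, (hasDerivAt_zAnsatz_right hF).deriv, zAnsatz]
  field_simp
  ring

end Ansatz

theorem stmt_18_general (h11 h10 h01 h00 x y : ℝ)
    (hden : h11 * x + h01 ≠ 0)
    (hdisc : 0 < (1 - hfun h11 h10 h01 h00 x y ^ 2) ^ 2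
      - 4 * (h11 * hfun h11 h10 h01 h00 x y - (h11 * h00 - h10 * h01)) ^ 2) :
    h11 * (x * deriv (fun t => zLip h11 h10 h01 h00 t y) x
        - y * deriv (fun t => zLip h11 h10 h01 h00 x t) y
        + 2 * zLip h11 h10 h01 h00 x y)
      + h01 * deriv (fun t => zLip h11 h10 h01 h00 t y) x
      - h10 * deriv (fun t => zLip h11 h10 h01 h00 x t) y = 0 := by
  rw [zLip_eq_zAnsatz]
  exact zAnsatz_symmetry_invariant (differentiableAt_lipschitzProfile hdisc.ne') hden

/-- The general Lipschitz solution satisfies the symmetry-invariance equation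
`h₁₁·(x z_x − y z_y + 2z) + h₀₁·z_x − h₁₀·z_y = 0`. -/
theorem stmt_18 (h11 h10 h01 h00 x y : ℝ)
    (h11ne : h11 ≠ 0)
    (hden : h11 * x + h01 ≠ 0)
    (habs : |hfun h11 h10 h01 h00 x y| < 1)
    (hdisc : 0 < (1 - hfun h11 h10 h01 h00 x y ^ 2) ^ 2
      - 4 * (h11 * hfun h11 h10 h01 h00 x y - (h11 * h00 - h10 * h01)) ^ 2) :
    h11 * (x * deriv (fun t => zLip h11 h10 h01 h00 t y) x
        - y * deriv (fun t => zLip h11 h10 h01 h00 x t) y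
        + 2 * zLip h11 h10 h01 h00 x y)
      + h01 * deriv (fun t => zLip h11 h10 h01 h00 t y) x
      - h10 * deriv (fun t => zLip h11 h10 h01 h00 x t) y = 0 :=
  stmt_18_general h11 h10 h01 h00 x y hden hdisc
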